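/- arXiv:0901.4063 — 2 statements merged into one kernel-verified Lean document; each statement's English description precedes it below -/
import Mathlib

section
/- Assume lim_{τ→0} ν(τ) = 0. Let ξ : Ω → V be locally absolutely continuous with derivative ξ' ∈ L²_ν(Ω;V). Then lim_{τ→0} ν(τ)‖ξ(τ)‖²_V = 0. In fact, for every τ₀ ∈ Ω one has limsup_{τ→0} ν(τ)‖ξ(τ)‖²_V ≤ 2τ₀ ∫₀^ℓ ν(s)‖ξ'(s)‖²_V ds. -/
/-! For `0 < τ ≤ τ₀` write `ξ τ = ξ τ₀ - ∫_τ^τ₀ ξ'`. Cauchy–Schwarz with the weights `μ` and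
`ν = μ⁻¹`, together with the monotonicity of `μ`, gives
`(∫_τ^τ₀ ‖ξ'‖)² ≤ (∫_τ^τ₀ μ) (∫ ν ‖ξ'‖²) ≤ τ₀ μ(τ) ∫ ν ‖ξ'‖²`, hence
`ν(τ) ‖ξ(τ)‖² ≤ 2 ν(τ) ‖ξ(τ₀)‖² + 2 τ₀ ∫ ν ‖ξ'‖²`.
The first term tends to `0` with `τ`, which gives the `limsup` bound; letting `τ₀ → 0` gives
the limit. -/

open MeasureTheory Set Filter Topology

theorem sq_integral_sqrt_mul_le {α : Type*} [MeasurableSpace α] {m : Measure α} {F G : α → ℝ}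
    (hF : Integrable F m) (hG : Integrable G m) (hF0 : 0 ≤ᵐ[m] F) (hG0 : 0 ≤ᵐ[m] G) :
    (∫ x, √(F x * G x) ∂m) ^ 2 ≤ (∫ x, F x ∂m) * ∫ x, G x ∂m := by
  have memLp_sqrt : ∀ {H : α → ℝ}, Integrable H m → 0 ≤ᵐ[m] H →
      MemLp (fun x => √(H x)) (ENNReal.ofReal 2) m ∧ ∫ x, √(H x) ^ (2 : ℝ) ∂m = ∫ x, H x ∂m := by
    intro H hH hH0
    have hsq : (fun x => √(H x) ^ 2) =ᵐ[m] H := hH0.mono fun x hx => Real.sq_sqrt hx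
    simp only [Real.rpow_two, ENNReal.ofReal_ofNat,
      memLp_two_iff_integrable_sq hH.1.aemeasurable.sqrt.aestronglyMeasurable]
    exact ⟨hH.congr hsq.symm, integral_congr_ae hsq⟩
  obtain ⟨hFLp, hFint⟩ := memLp_sqrt hF hF0
  obtain ⟨hGLp, hGint⟩ := memLp_sqrt hG hG0
  have hHolder := integral_mul_le_Lp_mul_Lq_of_nonneg Real.HolderConjugate.two_two
    (ae_of_all _ fun x => Real.sqrt_nonneg (F x)) (ae_of_all _ fun x => Real.sqrt_nonneg (G x))
    hFLp hGLp
  rw [hFint, hGint, ← Real.sqrt_eq_rpow, ← Real.sqrt_eq_rpow] at hHolder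
  have hsplit : ∫ x, √(F x * G x) ∂m = ∫ x, √(F x) * √(G x) ∂m :=
    integral_congr_ae (hF0.mono fun x hx => Real.sqrt_mul hx _)
  rw [hsplit]
  calc (∫ x, √(F x) * √(G x) ∂m) ^ 2 ≤ (√(∫ x, F x ∂m) * √(∫ x, G x ∂m)) ^ 2 :=
        pow_le_pow_left₀ (integral_nonneg fun x => by positivity) hHolder 2
    _ = (∫ x, F x ∂m) * ∫ x, G x ∂m := by
        rw [mul_pow, Real.sq_sqrt (integral_nonneg_of_ae hF0),
          Real.sq_sqrt (integral_nonneg_of_ae hG0)]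

theorem setIntegral_Ioc_le_of_antitoneOn {f : ℝ → ℝ} {a b : ℝ} (hab : a ≤ b)
    (hf : AntitoneOn f (Icc a b)) : ∫ s in Ioc a b, f s ≤ (b - a) * f a := by
  calc ∫ s in Ioc a b, f s ≤ ∫ _ in Ioc a b, f a :=
        setIntegral_mono_on ((hf.integrableOn_isCompact isCompact_Icc).mono_set Ioc_subset_Icc_self)
          (integrableOn_const measure_Ioc_lt_top.ne) measurableSet_Ioc
          fun s hs => hf (left_mem_Icc.2 hab) (Ioc_subset_Icc_self hs) hs.1.le
    _ = (b - a) * f a := by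
        rw [setIntegral_const, Real.volume_real_Ioc_of_le hab, smul_eq_mul]

theorem norm_le_norm_add_setIntegral_norm {V : Type*} [NormedAddCommGroup V] [NormedSpace ℝ V]
    {ξ ξ' : ℝ → V} {a b : ℝ} (hab : a ≤ b) (hFTC : ξ b = ξ a + ∫ s in a..b, ξ' s) :
    ‖ξ a‖ ≤ ‖ξ b‖ + ∫ s in Ioc a b, ‖ξ' s‖ := by
  rw [eq_sub_of_add_eq hFTC.symm, ← intervalIntegral.integral_of_le hab]
  exact (norm_sub_le _ _).trans
    (add_le_add_right (intervalIntegral.norm_integral_le_integral_norm hab) _)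

theorem weighted_norm_sq_le {V : Type*} [NormedAddCommGroup V] [NormedSpace ℝ V]
    {μ : ℝ → ℝ} {ξ ξ' : ℝ → V} {a b : ℝ} (hab : a ≤ b)
    (hμpos : ∀ s ∈ Icc a b, 0 < μ s) (hμmono : AntitoneOn μ (Icc a b))
    (hξ'L2 : IntegrableOn (fun s => (μ s)⁻¹ * ‖ξ' s‖ ^ 2) (Ioc a b))
    (hFTC : ξ b = ξ a + ∫ s in a..b, ξ' s) :
    (μ a)⁻¹ * ‖ξ a‖ ^ 2 ≤
      2 * (μ a)⁻¹ * ‖ξ b‖ ^ 2 + 2 * (b - a) * ∫ s in Ioc a b, (μ s)⁻¹ * ‖ξ' s‖ ^ 2 := by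
  set J := ∫ s in Ioc a b, (μ s)⁻¹ * ‖ξ' s‖ ^ 2
  have hpos : ∀ s ∈ Ioc a b, 0 < μ s := fun s hs => hμpos s (Ioc_subset_Icc_self hs)
  have hJ0 : 0 ≤ J := setIntegral_nonneg measurableSet_Ioc fun s hs => by
    have := hpos s hs; positivity
  have hμa := hμpos a (left_mem_Icc.2 hab)
  have hCS : (∫ s in Ioc a b, ‖ξ' s‖) ^ 2 ≤ μ a * ((b - a) * J) := by
    have hsqrt : ∀ s ∈ Ioc a b, √(μ s * ((μ s)⁻¹ * ‖ξ' s‖ ^ 2)) = ‖ξ' s‖ := fun s hs => by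
      rw [mul_inv_cancel_left₀ (hpos s hs).ne', Real.sqrt_sq (norm_nonneg _)]
    calc (∫ s in Ioc a b, ‖ξ' s‖) ^ 2
        = (∫ s in Ioc a b, √(μ s * ((μ s)⁻¹ * ‖ξ' s‖ ^ 2))) ^ 2 := by
          rw [setIntegral_congr_fun measurableSet_Ioc hsqrt]
      _ ≤ (∫ s in Ioc a b, μ s) * J :=
          sq_integral_sqrt_mul_le
            ((hμmono.integrableOn_isCompact isCompact_Icc).mono_set Ioc_subset_Icc_self) hξ'L2
            ((ae_restrict_iff' measurableSet_Ioc).2 (ae_of_all _ fun s hs => (hpos s hs).le))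
            ((ae_restrict_iff' measurableSet_Ioc).2 (ae_of_all _ fun s hs => by
              have := hpos s hs; positivity))
      _ ≤ ((b - a) * μ a) * J :=
          mul_le_mul_of_nonneg_right (setIntegral_Ioc_le_of_antitoneOn hab hμmono) hJ0
      _ = μ a * ((b - a) * J) := by ring
  have hξ : ‖ξ a‖ ^ 2 ≤ 2 * ‖ξ b‖ ^ 2 + 2 * (∫ s in Ioc a b, ‖ξ' s‖) ^ 2 := by
    have := norm_le_norm_add_setIntegral_norm hab hFTC
    nlinarith [norm_nonneg (ξ a), sq_nonneg (‖ξ b‖ - ∫ s in Ioc a b, ‖ξ' s‖)]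
  calc (μ a)⁻¹ * ‖ξ a‖ ^ 2
      ≤ (μ a)⁻¹ * (2 * ‖ξ b‖ ^ 2 + 2 * (μ a * ((b - a) * J))) := by gcongr; linarith
    _ = 2 * (μ a)⁻¹ * ‖ξ b‖ ^ 2 + 2 * (b - a) * J := by field_simp

theorem eventually_weighted_norm_sq_le {V : Type*} [NormedAddCommGroup V] [NormedSpace ℝ V]
    {μ : ℝ → ℝ} {ξ ξ' : ℝ → V} {Ω : Set ℝ} (hΩ : Ω.OrdConnected) (hΩpos : Ω ⊆ Ioi 0)
    (hμpos : ∀ s ∈ Ω, 0 < μ s) (hμmono : AntitoneOn μ Ω)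
    (hFTC : ∀ a b : ℝ, a ∈ Ω → b ∈ Ω → a ≤ b → ξ b = ξ a + ∫ s in a..b, ξ' s)
    (hξ'L2 : IntegrableOn (fun s => (μ s)⁻¹ * ‖ξ' s‖ ^ 2) Ω) {τ₀ : ℝ} (hτ₀ : τ₀ ∈ Ω) :
    ∀ᶠ τ in 𝓝[Ω] 0, (μ τ)⁻¹ * ‖ξ τ‖ ^ 2 ≤
      2 * (μ τ)⁻¹ * ‖ξ τ₀‖ ^ 2 + 2 * τ₀ * ∫ s in Ω, (μ s)⁻¹ * ‖ξ' s‖ ^ 2 := by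
  filter_upwards [self_mem_nhdsWithin,
    eventually_nhdsWithin_of_eventually_nhds (eventually_le_nhds (hΩpos hτ₀))] with τ hτ hle
  have hsub : Ioc τ τ₀ ⊆ Ω := Ioc_subset_Icc_self.trans (hΩ.out hτ hτ₀)
  have hnonneg : ∀ s ∈ Ω, 0 ≤ (μ s)⁻¹ * ‖ξ' s‖ ^ 2 := fun s hs => by
    have := hμpos s hs; positivity
  have hJ0 : 0 ≤ ∫ s in Ioc τ τ₀, (μ s)⁻¹ * ‖ξ' s‖ ^ 2 :=
    setIntegral_nonneg measurableSet_Ioc fun s hs => hnonneg s (hsub hs)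
  have hJI : ∫ s in Ioc τ τ₀, (μ s)⁻¹ * ‖ξ' s‖ ^ 2 ≤ ∫ s in Ω, (μ s)⁻¹ * ‖ξ' s‖ ^ 2 :=
    setIntegral_mono_set hξ'L2 ((ae_restrict_iff' hΩ.measurableSet).2 (ae_of_all _ hnonneg))
      hsub.eventuallyLE
  calc (μ τ)⁻¹ * ‖ξ τ‖ ^ 2
      ≤ 2 * (μ τ)⁻¹ * ‖ξ τ₀‖ ^ 2 + 2 * (τ₀ - τ) * ∫ s in Ioc τ τ₀, (μ s)⁻¹ * ‖ξ' s‖ ^ 2 :=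
        weighted_norm_sq_le hle (fun s hs => hμpos s (hΩ.out hτ hτ₀ hs))
          (hμmono.mono (hΩ.out hτ hτ₀)) (hξ'L2.mono_set hsub) (hFTC τ τ₀ hτ hτ₀ hle)
    _ ≤ 2 * (μ τ)⁻¹ * ‖ξ τ₀‖ ^ 2 + 2 * τ₀ * ∫ s in Ω, (μ s)⁻¹ * ‖ξ' s‖ ^ 2 := by
        have : 0 < τ₀ := hΩpos hτ₀
        gcongr
        exact sub_le_self _ (mem_Ioi.1 (hΩpos hτ)).le

theorem stmt6_general
    {V : Type*} [NormedAddCommGroup V] [InnerProductSpace ℝ V]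
    (ℓ : EReal)
    (Ω : Set ℝ) (hΩ : Ω = {s : ℝ | 0 < s ∧ (s : EReal) < ℓ})
    (μ : ℝ → ℝ)
    (hμpos : ∀ s ∈ Ω, 0 < μ s)
    (hμmono : AntitoneOn μ Ω)
    (hν0 : Tendsto (fun τ => (μ τ)⁻¹) (nhdsWithin 0 Ω) (nhds 0))
    (ξ ξ' : ℝ → V)
    (hFTC : ∀ a b : ℝ, a ∈ Ω → b ∈ Ω → a ≤ b → ξ b = ξ a + ∫ s in a..b, ξ' s)
    (hξ'L2 : IntegrableOn (fun s => (μ s)⁻¹ * ‖ξ' s‖ ^ 2) Ω) :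
    Tendsto (fun τ => (μ τ)⁻¹ * ‖ξ τ‖ ^ 2) (nhdsWithin 0 Ω) (nhds 0) ∧
      ∀ τ₀ ∈ Ω,
        Filter.limsup (fun τ => (μ τ)⁻¹ * ‖ξ τ‖ ^ 2) (nhdsWithin 0 Ω) ≤
          2 * τ₀ * ∫ s in Ω, (μ s)⁻¹ * ‖ξ' s‖ ^ 2 := by
  have hΩpos : Ω ⊆ Ioi 0 := hΩ ▸ fun s hs => hs.1
  have hΩIoc : ∀ τ₀ ∈ Ω, Ioc 0 τ₀ ⊆ Ω := by
    subst hΩ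
    exact fun τ₀ hτ₀ s hs => ⟨hs.1, (EReal.coe_le_coe_iff.2 hs.2).trans_lt hτ₀.2⟩
  have hΩconn : Ω.OrdConnected :=
    ⟨fun a ha b hb s hs => hΩIoc b hb ⟨(hΩpos ha).trans_le hs.1, hs.2⟩⟩
  set I := ∫ s in Ω, (μ s)⁻¹ * ‖ξ' s‖ ^ 2
  have hbound := fun τ₀ (hτ₀ : τ₀ ∈ Ω) =>
    eventually_weighted_norm_sq_le hΩconn hΩpos hμpos hμmono hFTC hξ'L2 hτ₀
  have hmajorant : ∀ τ₀ : ℝ, Tendsto (fun τ => 2 * (μ τ)⁻¹ * ‖ξ τ₀‖ ^ 2 + 2 * τ₀ * I)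
      (𝓝[Ω] 0) (𝓝 (2 * τ₀ * I)) := fun τ₀ => by
    simpa using ((hν0.const_mul 2).mul_const (‖ξ τ₀‖ ^ 2)).add_const (2 * τ₀ * I)
  have hnonneg : ∀ᶠ τ in 𝓝[Ω] 0, 0 ≤ (μ τ)⁻¹ * ‖ξ τ‖ ^ 2 :=
    eventually_nhdsWithin_of_forall fun τ hτ => by have := hμpos τ hτ; positivity
  rcases Ω.eq_empty_or_nonempty with rfl | ⟨r, hr⟩
  · simp
  have : (𝓝[Ω] 0).NeBot :=
    (left_nhdsWithin_Ioc_neBot (hΩpos hr)).mono (nhdsWithin_mono _ (hΩIoc r hr))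
  refine ⟨tendsto_order.2 ⟨fun a ha => hnonneg.mono fun τ h => ha.trans_le h, fun ε hε => ?_⟩,
    fun τ₀ hτ₀ => ?_⟩
  · have hsmall : ∀ᶠ τ₀ in 𝓝[Ω] 0, 2 * τ₀ * I < ε :=
      ((Continuous.tendsto' (by fun_prop) 0 0 (by simp)).mono_left nhdsWithin_le_nhds).eventually
        (gt_mem_nhds hε)
    obtain ⟨τ₀, hsmall, hτ₀⟩ := (hsmall.and self_mem_nhdsWithin).exists
    filter_upwards [hbound τ₀ hτ₀, (hmajorant τ₀).eventually (gt_mem_nhds hsmall)] with τ h1 h2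
      using h1.trans_lt h2
  · exact (limsup_le_limsup (hbound τ₀ hτ₀) (isCoboundedUnder_le_of_eventually_le _ hnonneg)
      (hmajorant τ₀).isBoundedUnder_le).trans_eq (hmajorant τ₀).limsup_eq

/-- Assume `ν(τ) = 1/μ(τ) → 0` as `τ → 0⁺`. If `ξ` is locally absolutely
continuous on `Ω` with derivative `ξ' ∈ L²_ν(Ω;V)`, then `ν(τ)‖ξ(τ)‖² → 0` as `τ → 0⁺`;
in fact for every `τ₀ ∈ Ω`,
`limsup_{τ→0} ν(τ)‖ξ(τ)‖² ≤ 2 τ₀ ∫₀^ℓ ν(s)‖ξ'(s)‖² ds`. -/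
theorem stmt6
    {V : Type*} [NormedAddCommGroup V] [InnerProductSpace ℝ V] [CompleteSpace V]
    (ℓ : EReal) (hℓ : 0 < ℓ)
    (Ω : Set ℝ) (hΩ : Ω = {s : ℝ | 0 < s ∧ (s : EReal) < ℓ})
    (μ : ℝ → ℝ)
    (hμpos : ∀ s ∈ Ω, 0 < μ s)
    (hμmono : AntitoneOn μ Ω)
    (hμint : IntegrableOn μ Ω)
    (hν0 : Tendsto (fun τ => (μ τ)⁻¹) (nhdsWithin 0 Ω) (nhds 0))
    (ξ ξ' : ℝ → V)
    (hξ'loc : ∀ a b : ℝ, a ∈ Ω → b ∈ Ω → IntegrableOn ξ' (Icc a b))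
    (hFTC : ∀ a b : ℝ, a ∈ Ω → b ∈ Ω → a ≤ b → ξ b = ξ a + ∫ s in a..b, ξ' s)
    (hξ'L2 : IntegrableOn (fun s => (μ s)⁻¹ * ‖ξ' s‖ ^ 2) Ω) :
    Tendsto (fun τ => (μ τ)⁻¹ * ‖ξ τ‖ ^ 2) (nhdsWithin 0 Ω) (nhds 0) ∧
      ∀ τ₀ ∈ Ω,
        Filter.limsup (fun τ => (μ τ)⁻¹ * ‖ξ τ‖ ^ 2) (nhdsWithin 0 Ω) ≤
          2 * τ₀ * ∫ s in Ω, (μ s)⁻¹ * ‖ξ' s‖ ^ 2 :=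
  stmt6_general ℓ Ω hΩ μ hμpos hμmono hν0 ξ ξ' hFTC hξ'L2
end

section
/- Let ξ⋆ ∈ L²_ν(Ω;V), and set w = ∫₀^ℓ (∫_τ^ℓ e^{τ−s} ξ⋆(s) ds) dτ. Then w ∈ V and ‖w‖_V ≤ √(M(0)) · ‖ξ⋆‖_{L²_ν(Ω;V)}. -/
/-!
Writing `‖ξ⋆‖ = √μ · (√ν ‖ξ⋆‖)`, Cauchy–Schwarz shows that `ξ⋆` is integrable on `Ω` with
`∫ ‖ξ⋆‖ ≤ √M(0) ‖ξ⋆‖_{L²_ν}`. The double integral is the integral over `Ω × Ω` of the kernel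
`𝟙[τ < s] e^{τ - s} ξ⋆(s)`; by Tonelli, integrating first in `τ` and using
`∫_{-∞}^s e^{τ - s} dτ = 1`, its `L¹` norm is at most `∫ ‖ξ⋆‖`, and Fubini does the rest.
-/

open MeasureTheory Set Filter

section WeightedCauchySchwarz

variable {α E : Type*} [MeasurableSpace α] [NormedAddCommGroup E] {m : Measure α} {w : α → ℝ}
  {g : α → E}

lemma memLp_two_sqrt (hw : Integrable w m) (hw0 : ∀ᵐ x ∂m, 0 ≤ w x) :
    MemLp (fun x => Real.sqrt (w x)) 2 m := by
  refine (memLp_two_iff_integrable_sq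
    (Real.continuous_sqrt.comp_aestronglyMeasurable hw.aestronglyMeasurable)).2 ?_
  refine hw.congr ?_
  filter_upwards [hw0] with x hx
  exact (Real.sq_sqrt hx).symm

lemma memLp_two_sqrt_inv_mul_norm (hw : AEStronglyMeasurable w m) (hw0 : ∀ᵐ x ∂m, 0 ≤ w x)
    (hg : AEStronglyMeasurable g m) (hwg : Integrable (fun x => (w x)⁻¹ * ‖g x‖ ^ 2) m) :
    MemLp (fun x => Real.sqrt (w x)⁻¹ * ‖g x‖) 2 m := by
  have hsqrt_inv : AEStronglyMeasurable (fun x => Real.sqrt (w x)⁻¹) m :=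
    (Real.continuous_sqrt.measurable.comp_aemeasurable hw.aemeasurable.inv).aestronglyMeasurable
  refine (memLp_two_iff_integrable_sq (hsqrt_inv.mul hg.norm)).2 ?_
  refine hwg.congr ?_
  filter_upwards [hw0] with x hx
  change _ = (Real.sqrt (w x)⁻¹ * ‖g x‖) ^ 2
  rw [mul_pow, Real.sq_sqrt (inv_nonneg.2 hx)]

lemma sqrt_mul_sqrt_inv_mul_norm_ae_eq (hw : ∀ᵐ x ∂m, 0 < w x) :
    (fun x => Real.sqrt (w x) * (Real.sqrt (w x)⁻¹ * ‖g x‖)) =ᵐ[m] fun x => ‖g x‖ := by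
  filter_upwards [hw] with x hx
  rw [← mul_assoc, ← Real.sqrt_mul hx.le, mul_inv_cancel₀ hx.ne', Real.sqrt_one, one_mul]

theorem integrable_of_inv_weight_mul_norm_sq
    (hw : ∀ᵐ x ∂m, 0 < w x) (hwi : Integrable w m) (hg : AEStronglyMeasurable g m)
    (hwg : Integrable (fun x => (w x)⁻¹ * ‖g x‖ ^ 2) m) : Integrable g m := by
  have hw0 : ∀ᵐ x ∂m, 0 ≤ w x := hw.mono fun x hx => hx.le
  refine (integrable_norm_iff hg).1 ?_
  refine Integrable.congr ?_ (sqrt_mul_sqrt_inv_mul_norm_ae_eq hw)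
  exact (memLp_two_sqrt hwi hw0).integrable_mul
    (memLp_two_sqrt_inv_mul_norm hwi.aestronglyMeasurable hw0 hg hwg)

theorem integral_norm_le_sqrt_weight_mul_sqrt_inv_weight_mul_norm_sq
    (hw : ∀ᵐ x ∂m, 0 < w x) (hwi : Integrable w m) (hg : AEStronglyMeasurable g m)
    (hwg : Integrable (fun x => (w x)⁻¹ * ‖g x‖ ^ 2) m) :
    ∫ x, ‖g x‖ ∂m ≤ Real.sqrt (∫ x, w x ∂m) * Real.sqrt (∫ x, (w x)⁻¹ * ‖g x‖ ^ 2 ∂m) := by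
  have hw0 : ∀ᵐ x ∂m, 0 ≤ w x := hw.mono fun x hx => hx.le
  have hsq := integral_mul_le_Lp_mul_Lq_of_nonneg Real.HolderConjugate.two_two
    (Eventually.of_forall fun x => Real.sqrt_nonneg (w x))
    (Eventually.of_forall fun x => mul_nonneg (Real.sqrt_nonneg (w x)⁻¹) (norm_nonneg (g x)))
    (by simpa using memLp_two_sqrt hwi hw0)
    (by simpa using memLp_two_sqrt_inv_mul_norm hwi.aestronglyMeasurable hw0 hg hwg)
  rw [integral_congr_ae (sqrt_mul_sqrt_inv_mul_norm_ae_eq hw)] at hsq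
  convert hsq using 2 <;> rw [Real.sqrt_eq_rpow] <;> congr 1 <;> refine integral_congr_ae ?_
  · filter_upwards [hw0] with x hx
    rw [Real.rpow_two, Real.sq_sqrt hx]
  · filter_upwards [hw0] with x hx
    rw [Real.rpow_two, mul_pow, Real.sq_sqrt (inv_nonneg.2 hx)]

end WeightedCauchySchwarz

lemma lintegral_exp_sub_Iio (s : ℝ) : ∫⁻ τ in Iio s, ENNReal.ofReal (Real.exp (τ - s)) = 1 := by
  have hint : IntegrableOn (fun τ => Real.exp (τ - s)) (Iio s) := by
    simp_rw [Real.exp_sub]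
    exact ((integrableOn_exp_Iic s).mono_set Iio_subset_Iic_self).div_const _
  rw [← ofReal_integral_eq_lintegral_ofReal hint
    (Eventually.of_forall fun τ => (Real.exp_pos _).le), ← integral_Iic_eq_integral_Iio]
  simp_rw [Real.exp_sub]
  rw [integral_div, integral_exp_Iic, div_self (Real.exp_pos s).ne', ENNReal.ofReal_one]

section ExpTailKernel

variable {V : Type*} [NormedAddCommGroup V] [NormedSpace ℝ V] {Ω : Set ℝ} {f : ℝ → V}

noncomputable def expTailKernel (f : ℝ → V) : ℝ × ℝ → V :=
  {p | p.1 < p.2}.indicator fun p => Real.exp (p.1 - p.2) • f p.2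

lemma aestronglyMeasurable_expTailKernel (hf : AEStronglyMeasurable f (volume.restrict Ω)) :
    AEStronglyMeasurable (expTailKernel f) ((volume.restrict Ω).prod (volume.restrict Ω)) :=
  ((Real.continuous_exp.comp (continuous_fst.sub continuous_snd)).aestronglyMeasurable.smul
    hf.comp_snd).indicator (measurableSet_lt measurable_fst measurable_snd)

lemma integral_expTailKernel_right (τ : ℝ) :
    ∫ s, expTailKernel f (τ, s) ∂volume.restrict Ω
      = ∫ s in Ω ∩ Ioi τ, Real.exp (τ - s) • f s := by
  rw [inter_comm, ← Measure.restrict_restrict measurableSet_Ioi,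
    ← integral_indicator measurableSet_Ioi]
  rfl

lemma lintegral_enorm_expTailKernel_le (hf : AEStronglyMeasurable f (volume.restrict Ω)) :
    ∫⁻ p, ‖expTailKernel f p‖ₑ ∂(volume.restrict Ω).prod (volume.restrict Ω)
      ≤ ∫⁻ s in Ω, ‖f s‖ₑ := by
  rw [lintegral_prod_symm _ (aestronglyMeasurable_expTailKernel hf).enorm]
  refine lintegral_mono fun s => ?_
  calc ∫⁻ τ in Ω, ‖expTailKernel f (τ, s)‖ₑ
      ≤ ∫⁻ τ, ‖expTailKernel f (τ, s)‖ₑ := setLIntegral_le_lintegral Ω _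
    _ = ∫⁻ τ in Iio s, ENNReal.ofReal (Real.exp (τ - s)) * ‖f s‖ₑ := by
        rw [← lintegral_indicator measurableSet_Iio]
        refine lintegral_congr fun τ => ?_
        by_cases hτ : τ < s
        · simp [expTailKernel, hτ, enorm_smul, Real.enorm_eq_ofReal (Real.exp_pos _).le]
        · simp [expTailKernel, hτ]
    _ = ‖f s‖ₑ := by rw [lintegral_mul_const' _ _ enorm_ne_top, lintegral_exp_sub_Iio, one_mul]

lemma integrable_expTailKernel (hf : IntegrableOn f Ω) :
    Integrable (expTailKernel f) ((volume.restrict Ω).prod (volume.restrict Ω)) :=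
  ⟨aestronglyMeasurable_expTailKernel hf.aestronglyMeasurable,
    (lintegral_enorm_expTailKernel_le hf.aestronglyMeasurable).trans_lt hf.hasFiniteIntegral⟩

theorem integrableOn_integral_exp_tail (hf : IntegrableOn f Ω) :
    IntegrableOn (fun τ => ∫ s in Ω ∩ Ioi τ, Real.exp (τ - s) • f s) Ω := by
  have h := (integrable_expTailKernel hf).integral_prod_left
  simp only [integral_expTailKernel_right] at h
  exact h

theorem norm_integral_integral_exp_tail_le (hf : IntegrableOn f Ω) :
    ‖∫ τ in Ω, ∫ s in Ω ∩ Ioi τ, Real.exp (τ - s) • f s‖ ≤ ∫ s in Ω, ‖f s‖ := by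
  have hK := integrable_expTailKernel hf
  simp_rw [← integral_expTailKernel_right, ← integral_prod _ hK]
  calc ‖∫ p, expTailKernel f p ∂(volume.restrict Ω).prod (volume.restrict Ω)‖
      ≤ ∫ p, ‖expTailKernel f p‖ ∂(volume.restrict Ω).prod (volume.restrict Ω) :=
        norm_integral_le_integral_norm _
    _ ≤ ∫ s in Ω, ‖f s‖ := by
        rw [integral_norm_eq_lintegral_enorm hK.aestronglyMeasurable,
          integral_norm_eq_lintegral_enorm hf.aestronglyMeasurable]
        exact ENNReal.toReal_mono hf.hasFiniteIntegral.ne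
          (lintegral_enorm_expTailKernel_le hf.aestronglyMeasurable)

end ExpTailKernel

theorem stmt8_general
    {V : Type*} [NormedAddCommGroup V] [InnerProductSpace ℝ V]
    (ℓ : EReal)
    (Ω : Set ℝ) (hΩ : Ω = {s : ℝ | 0 < s ∧ (s : EReal) < ℓ})
    (μ : ℝ → ℝ)
    (hμpos : ∀ s ∈ Ω, 0 < μ s)
    (hμint : IntegrableOn μ Ω)
    (ξs : ℝ → V)
    (hξsmeas : AEStronglyMeasurable ξs (volume.restrict Ω))
    (hξsL2 : IntegrableOn (fun s => (μ s)⁻¹ * ‖ξs s‖ ^ 2) Ω) :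
    IntegrableOn (fun τ => ∫ s in Ω ∩ Ioi τ, Real.exp (τ - s) • ξs s) Ω ∧
      ‖∫ τ in Ω, ∫ s in Ω ∩ Ioi τ, Real.exp (τ - s) • ξs s‖ ≤
        Real.sqrt (∫ σ in Ω, μ σ) *
          Real.sqrt (∫ s in Ω, (μ s)⁻¹ * ‖ξs s‖ ^ 2) := by
  have hΩm : MeasurableSet Ω :=
    hΩ ▸ measurableSet_Ioi.inter (measurable_coe_real_ereal measurableSet_Iio)
  have hμ : ∀ᵐ s ∂volume.restrict Ω, 0 < μ s := ae_restrict_of_forall_mem hΩm hμpos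
  have hξ : IntegrableOn ξs Ω := integrable_of_inv_weight_mul_norm_sq hμ hμint hξsmeas hξsL2
  exact ⟨integrableOn_integral_exp_tail hξ, (norm_integral_integral_exp_tail_le hξ).trans
    (integral_norm_le_sqrt_weight_mul_sqrt_inv_weight_mul_norm_sq hμ hμint hξsmeas hξsL2)⟩

/-- For `ξ⋆ ∈ L²_ν(Ω;V)`, the vector
`w = ∫₀^ℓ (∫_τ^ℓ e^{τ−s} ξ⋆(s) ds) dτ` is well defined in `V`
(the outer integrand is Bochner integrable on `Ω`) and
`‖w‖ ≤ √(M(0)) ‖ξ⋆‖_{L²_ν(Ω;V)}`. -/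
theorem stmt8
    {V : Type*} [NormedAddCommGroup V] [InnerProductSpace ℝ V] [CompleteSpace V]
    (ℓ : EReal) (hℓ : 0 < ℓ)
    (Ω : Set ℝ) (hΩ : Ω = {s : ℝ | 0 < s ∧ (s : EReal) < ℓ})
    (μ : ℝ → ℝ)
    (hμpos : ∀ s ∈ Ω, 0 < μ s)
    (hμmono : AntitoneOn μ Ω)
    (hμint : IntegrableOn μ Ω)
    (ξs : ℝ → V)
    (hξsmeas : AEStronglyMeasurable ξs (volume.restrict Ω))
    (hξsL2 : IntegrableOn (fun s => (μ s)⁻¹ * ‖ξs s‖ ^ 2) Ω) :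
    IntegrableOn (fun τ => ∫ s in Ω ∩ Ioi τ, Real.exp (τ - s) • ξs s) Ω ∧
      ‖∫ τ in Ω, ∫ s in Ω ∩ Ioi τ, Real.exp (τ - s) • ξs s‖ ≤
        Real.sqrt (∫ σ in Ω, μ σ) *
          Real.sqrt (∫ s in Ω, (μ s)⁻¹ * ‖ξs s‖ ^ 2) :=
  stmt8_general ℓ Ω hΩ μ hμpos hμint ξs hξsmeas hξsL2
end
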